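/- arXiv:1309.2524 — 3 statements merged into one kernel-verified Lean document; each statement's English description precedes it below -/
import Mathlib

section
/- The space X_crs is contractible: there is a homotopy h : X_crs × [0,1] → X_crs from the identity map to the constant map at the origin x. -/
open Set Topology Filter

noncomputable section

/-- The closed unit disk. -/
def D : Type := {z : ℂ // ‖z‖ ≤ 1}

instance : TopologicalSpace D := instTopologicalSpaceSubtype

/-- The wedge point on each disk. -/
def basept : D := ⟨1, by norm_num⟩

/-- The outer point (outer 0-cell) on each disk. -/
def outerpt : D := ⟨-1, by norm_num⟩

/-- Wedge relation: glue all copies of the base point together. -/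
def wsetoid : Setoid (ℕ × D) where
  r p q := p = q ∨ (p.2 = basept ∧ q.2 = basept)
  iseqv := by
    constructor
    · intro p; exact Or.inl rfl
    · rintro p q (rfl | ⟨h1, h2⟩)
      · exact Or.inl rfl
      · exact Or.inr ⟨h2, h1⟩
    · rintro p q r (rfl | ⟨h1, h2⟩) (rfl | ⟨h3, h4⟩)
      · exact Or.inl rfl
      · exact Or.inr ⟨h3, h4⟩
      · exact Or.inr ⟨h1, h2⟩
      · exact Or.inr ⟨h1, h4⟩

/-- The wedge of countably many closed 2-disks, with the weak (CW) topology. -/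
def X : Type := Quotient wsetoid

instance : TopologicalSpace X := instTopologicalSpaceQuotient

/-- The point of the `n`-th disk with disk-coordinate `z`. -/
def pt (n : ℕ) (z : D) : X := Quotient.mk wsetoid (n, z)

/-- The origin (the wedge point `x`). -/
def origin : X := pt 0 basept

/-- The outer 0-cell `e_n^0` of the `n`-th disk. -/
def outer (n : ℕ) : X := pt n outerpt

/-- The `n`-th closed 2-cell `C_n`. -/
def cell (n : ℕ) : Set X := Set.range (pt n)

/-- The open sets of the coarser topology `τ`: CW-open sets which either do not
contain the origin, or contain all but finitely many punctured cells `C_n \ {e_n^0}`. -/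
def crsOpen (U : Set X) : Prop :=
  IsOpen U ∧ (origin ∉ U ∨ {n : ℕ | ¬ (cell n \ {outer n} ⊆ U)}.Finite)

/-- The coarser topology `τ` on the wedge of disks. -/
def crsTop : TopologicalSpace X where
  IsOpen := crsOpen
  isOpen_univ := ⟨isOpen_univ, Or.inr (Set.Finite.subset Set.finite_empty
    (fun _ hn => absurd (Set.subset_univ _) hn))⟩
  isOpen_inter := by
    rintro U V ⟨hU, hU2⟩ ⟨hV, hV2⟩
    refine ⟨hU.inter hV, ?_⟩
    by_cases hx : origin ∈ U ∩ V
    · have h1 := hU2.resolve_left (fun h => h hx.1)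
      have h2 := hV2.resolve_left (fun h => h hx.2)
      refine Or.inr ((h1.union h2).subset ?_)
      intro n hn
      by_contra hc
      simp only [Set.mem_union, Set.mem_setOf_eq, not_or, not_not] at hc
      exact hn (Set.subset_inter hc.1 hc.2)
    · exact Or.inl hx
  isOpen_sUnion := by
    intro S hS
    refine ⟨isOpen_sUnion fun U hU => (hS U hU).1, ?_⟩
    by_cases hx : origin ∈ ⋃₀ S
    · obtain ⟨U, hUS, hxU⟩ := hx
      have h1 := (hS U hUS).2.resolve_left (fun h => h hxU)
      refine Or.inr (h1.subset ?_)
      intro n hn hsub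
      exact hn (hsub.trans (Set.subset_sUnion_of_mem hUS))
    · exact Or.inl hx

/-! Glue the straight-line contractions of the disks onto the wedge point. The glued homotopy is
continuous for the CW topology, since a quotient map times the locally compact interval is again
a quotient map, and away from the origin `τ` has the same open sets as the CW topology. At the
origin, the tube lemma gives a CW-neighbourhood `V` with `V × [0,1]` mapped into a `τ`-open `U`.
Adjoining to `V` the punctured cells `C_n \ {e_n^0}` contained in `U` (all but finitely many)
makes it `τ`-open, and these punctured cells are mapped into themselves because the straight-line
contraction of a disk never passes through `-1`. -/

instance : T1Space D := inferInstanceAs (T1Space {z : ℂ // ‖z‖ ≤ 1})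

lemma basept_ne_outerpt : basept ≠ outerpt := by
  intro h
  have : (1 : ℂ) = -1 := congrArg Subtype.val h
  norm_num at this

def diskContract (z : D) (t : unitInterval) : D :=
  ⟨((1 - t : ℝ) : ℂ) * z.1 + (t : ℝ), by
    have ht := t.2
    calc ‖((1 - t : ℝ) : ℂ) * z.1 + (t : ℝ)‖ ≤ (1 - t) * ‖z.1‖ + t := by
          refine (norm_add_le _ _).trans_eq ?_
          rw [norm_mul, Complex.norm_real, Complex.norm_real, Real.norm_of_nonneg ht.1,
            Real.norm_of_nonneg (by linarith [ht.2])]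
      _ ≤ (1 - t) * 1 + t := by
          gcongr
          · linarith [ht.2]
          · exact z.2
      _ = 1 := by ring⟩

lemma continuous_diskContract : Continuous fun p : D × unitInterval => diskContract p.1 p.2 :=
  Continuous.subtype_mk (by fun_prop) _

lemma diskContract_zero (z : D) : diskContract z 0 = z :=
  Subtype.ext (by simp [diskContract])

lemma diskContract_one (z : D) : diskContract z 1 = basept :=
  Subtype.ext (by simp [diskContract, basept])

lemma diskContract_basept (t : unitInterval) : diskContract basept t = basept :=
  Subtype.ext (by simp [diskContract, basept])

lemma diskContract_ne_outerpt {z : D} (hz : z ≠ outerpt) (t : unitInterval) :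
    diskContract z t ≠ outerpt := by
  intro h
  have hval : ((1 - t : ℝ) : ℂ) * z.1 = -(1 + t : ℝ) := by
    have : ((1 - t : ℝ) : ℂ) * z.1 + (t : ℝ) = -1 := congrArg Subtype.val h
    push_cast at this ⊢
    linear_combination this
  have hnorm := congrArg norm hval
  rw [norm_mul, norm_neg, Complex.norm_real, Complex.norm_real,
    Real.norm_of_nonneg (by linarith [t.2.2]), Real.norm_of_nonneg (by linarith [t.2.1])] at hnorm
  have ht : (t : ℝ) = 0 := by nlinarith [t.2.1, t.2.2, z.2]
  exact hz (Subtype.ext (by simpa [ht, outerpt] using hval))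

lemma pt_eq_pt_iff {n m : ℕ} {z w : D} :
    pt n z = pt m w ↔ (n = m ∧ z = w) ∨ (z = basept ∧ w = basept) :=
  Quotient.eq.trans (or_congr Prod.ext_iff Iff.rfl)

lemma pt_basept (n : ℕ) : pt n basept = origin :=
  pt_eq_pt_iff.mpr (Or.inr ⟨rfl, rfl⟩)

lemma pt_eq_origin_iff {n : ℕ} {z : D} : pt n z = origin ↔ z = basept := by
  rw [origin, pt_eq_pt_iff]
  constructor
  · rintro (⟨-, h⟩ | ⟨h, -⟩) <;> exact h
  · exact fun h => Or.inr ⟨h, rfl⟩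

lemma pt_eq_outer_iff {n m : ℕ} {z : D} : pt n z = outer m ↔ n = m ∧ z = outerpt := by
  rw [outer, pt_eq_pt_iff]
  constructor
  · rintro (h | ⟨-, h⟩)
    · exact h
    · exact absurd h.symm basept_ne_outerpt
  · exact Or.inl

lemma isQuotientMap_pt : Topology.IsQuotientMap (fun p : ℕ × D => pt p.1 p.2) :=
  isQuotientMap_quotient_mk'

lemma isClosed_origin : IsClosed ({origin} : Set X) := by
  rw [← isQuotientMap_pt.isClosed_preimage]
  have : (fun p : ℕ × D => pt p.1 p.2) ⁻¹' {origin} = univ ×ˢ {basept} := by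
    ext ⟨n, z⟩
    simp [pt_eq_origin_iff]
  rw [this]
  exact isClosed_univ.prod isClosed_singleton

def wedgeContract (p : X × unitInterval) : X :=
  Quotient.map (fun q : ℕ × D => (q.1, diskContract q.2 p.2))
    (by
      rintro ⟨n, z⟩ ⟨m, w⟩ (h | ⟨h₁, h₂⟩)
      · exact Or.inl (by rw [h])
      · dsimp only at h₁ h₂
        subst h₁ h₂
        exact Or.inr ⟨diskContract_basept _, diskContract_basept _⟩) p.1

lemma wedgeContract_pt (n : ℕ) (z : D) (t : unitInterval) :
    wedgeContract (pt n z, t) = pt n (diskContract z t) := rfl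

lemma wedgeContract_origin (t : unitInterval) : wedgeContract (origin, t) = origin := by
  rw [origin, wedgeContract_pt, diskContract_basept]

lemma wedgeContract_zero (y : X) : wedgeContract (y, 0) = y := by
  obtain ⟨⟨n, z⟩, rfl⟩ := Quotient.exists_rep y
  exact congrArg (pt n) (diskContract_zero z)

lemma wedgeContract_one (y : X) : wedgeContract (y, 1) = origin := by
  obtain ⟨⟨n, z⟩, rfl⟩ := Quotient.exists_rep y
  exact (congrArg (pt n) (diskContract_one z)).trans (pt_basept n)

lemma continuous_wedgeContract : Continuous wedgeContract :=
  isQuotientMap_pt.continuous_lift_prod_left <| isQuotientMap_pt.continuous.comp <|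
    continuous_fst.fst.prodMk
      (continuous_diskContract.comp (continuous_fst.snd.prodMk continuous_snd))

def puncturedCells (G : Set ℕ) : Set X := {y | ∃ n ∈ G, ∃ w ≠ outerpt, pt n w = y}

lemma pt_mem_cell_diff_outer {n : ℕ} {w : D} (hw : w ≠ outerpt) : pt n w ∈ cell n \ {outer n} :=
  ⟨⟨w, rfl⟩, fun h => hw (pt_eq_outer_iff.mp h).2⟩

lemma cell_diff_outer_subset_puncturedCells {G : Set ℕ} {n : ℕ} (hn : n ∈ G) :
    cell n \ {outer n} ⊆ puncturedCells G := by
  rintro _ ⟨⟨w, rfl⟩, hw⟩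
  exact ⟨n, hn, w, fun h => hw (congrArg (pt n) h), rfl⟩

lemma puncturedCells_subset {G : Set ℕ} {U : Set X} (hU : ∀ n ∈ G, cell n \ {outer n} ⊆ U) :
    puncturedCells G ⊆ U := by
  rintro _ ⟨n, hn, w, hw, rfl⟩
  exact hU n hn (pt_mem_cell_diff_outer hw)

lemma wedgeContract_mem_puncturedCells {G : Set ℕ} {y : X} (hy : y ∈ puncturedCells G)
    (t : unitInterval) : wedgeContract (y, t) ∈ puncturedCells G := by
  obtain ⟨n, hn, w, hw, rfl⟩ := hy
  exact ⟨n, hn, diskContract w t, diskContract_ne_outerpt hw t, rfl⟩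

lemma crsOpen_union_puncturedCells {V : Set X} (hV : IsOpen V) (hV₀ : origin ∈ V) {G : Set ℕ}
    (hG : Gᶜ.Finite) : crsOpen (V ∪ puncturedCells G) := by
  refine ⟨?_, Or.inr (hG.subset fun n hn hnG => hn (subset_union_of_subset_right
    (cell_diff_outer_subset_puncturedCells hnG) V))⟩
  rw [← isQuotientMap_pt.isOpen_preimage]
  suffices (fun p : ℕ × D => pt p.1 p.2) ⁻¹' (V ∪ puncturedCells G) =
      (fun p : ℕ × D => pt p.1 p.2) ⁻¹' V ∪ G ×ˢ {outerpt}ᶜ by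
    rw [this]
    exact (hV.preimage isQuotientMap_pt.continuous).union
      ((isOpen_discrete G).prod isOpen_compl_singleton)
  ext ⟨m, w⟩
  simp only [mem_preimage, mem_union, mem_prod, mem_compl_singleton_iff]
  constructor
  · rintro (hmw | ⟨n, hn, v, hv, h⟩)
    · exact Or.inl hmw
    rcases pt_eq_pt_iff.mp h with ⟨rfl, rfl⟩ | ⟨-, rfl⟩
    · exact Or.inr ⟨hn, hv⟩
    · exact Or.inl (pt_basept m ▸ hV₀)
  · rintro (hmw | ⟨hm, hw⟩)
    · exact Or.inl hmw
    · exact Or.inr ⟨m, hm, w, hw, rfl⟩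

lemma exists_crsOpen_prod_subset_of_ne_origin {N : Set (X × unitInterval)} (hN : IsOpen N)
    {y : X} {t : unitInterval} (hyt : (y, t) ∈ N) (hy : y ≠ origin) :
    ∃ V W, IsOpen[crsTop] V ∧ IsOpen W ∧ y ∈ V ∧ t ∈ W ∧ V ×ˢ W ⊆ N := by
  obtain ⟨V, W, hV, hW, hyV, htW, hVW⟩ := isOpen_prod_iff.mp hN y t hyt
  exact ⟨V \ {origin}, W, ⟨hV.sdiff isClosed_origin, Or.inl fun h => h.2 rfl⟩, hW, ⟨hyV, hy⟩,
    htW, (prod_mono sdiff_subset subset_rfl).trans hVW⟩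

lemma exists_crsOpen_prod_univ_subset {U : Set X} (hU : IsOpen[crsTop] U) (hU₀ : origin ∈ U) :
    ∃ V, IsOpen[crsTop] V ∧ origin ∈ V ∧ V ×ˢ univ ⊆ wedgeContract ⁻¹' U := by
  have hF : {n | ¬ cell n \ {outer n} ⊆ U}.Finite := hU.2.resolve_left (not_not.mpr hU₀)
  obtain ⟨V, W, hV, -, hV₀, hW, hVW⟩ := generalized_tube_lemma isCompact_singleton isCompact_univ
    (hU.1.preimage continuous_wedgeContract)
    (by
      rintro ⟨_, t⟩ ⟨rfl, -⟩
      rw [mem_preimage, wedgeContract_origin]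
      exact hU₀)
  refine ⟨V ∪ puncturedCells {n | cell n \ {outer n} ⊆ U},
    crsOpen_union_puncturedCells hV (hV₀ rfl) hF, Or.inl (hV₀ rfl), ?_⟩
  rintro ⟨y, t⟩ ⟨hy | hy, -⟩
  · exact hVW ⟨hy, hW trivial⟩
  · exact puncturedCells_subset (fun _ hn => hn) (wedgeContract_mem_puncturedCells hy t)

theorem continuous_wedgeContract_crs :
    Continuous[@instTopologicalSpaceProd X unitInterval crsTop _, crsTop] wedgeContract := by
  rw [continuous_def]
  intro U hU
  rw [@isOpen_prod_iff X unitInterval crsTop]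
  intro y t hyt
  by_cases hy : y = origin
  · subst hy
    obtain ⟨V, hV, hV₀, hVU⟩ := exists_crsOpen_prod_univ_subset hU (wedgeContract_origin t ▸ hyt)
    exact ⟨V, univ, hV, isOpen_univ, hV₀, trivial, hVU⟩
  · exact exists_crsOpen_prod_subset_of_ne_origin (hU.1.preimage continuous_wedgeContract) hyt hy

/-- `X_crs` is contractible: there is a homotopy from the identity to the
constant map at the origin. -/
theorem crs_contractible :
    ∃ h : X × unitInterval → X,
      Continuous[@instTopologicalSpaceProd X unitInterval crsTop _, crsTop] h ∧
      (∀ y : X, h (y, 0) = y) ∧ (∀ y : X, h (y, 1) = origin) :=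
  ⟨wedgeContract, continuous_wedgeContract_crs, wedgeContract_zero, wedgeContract_one⟩

end
end

section
/- The sheaf of continuous real-valued functions on X_crs is not soft: the restriction map C(X_crs, ℝ) → C(A, ℝ) = Maps(A, ℝ) to the closed discrete subset A = ⋃_{n≥1} e_n^0 is not surjective; equivalently, there is a real-valued function on A (e.g. any unbounded one) that does not extend to a continuous function on X_crs. -/
open Set Topology Filter

noncomputable section

/-- The open set `U₀`: complement of all the outer 0-cells. -/
def U0 : Set X := {y | ∀ n, y ≠ outer n}

/-- The set `A` of all outer 0-cells. -/
def A : Set X := Set.range outer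

instance : Nontrivial D := ⟨⟨basept, outerpt, basept_ne_outerpt⟩⟩

instance : ConnectedSpace D :=
  isConnected_iff_connectedSpace.mp
    (by simpa only [← mem_closedBall_zero_iff, ofPred_mem_eq] using
      (convex_closedBall (0 : ℂ) 1).isConnected (by simp) : IsConnected {z : ℂ | ‖z‖ ≤ 1})

lemma outer_injective : Function.Injective outer := by
  intro n m h
  rcases Quotient.exact h with h | ⟨h, -⟩
  · exact (Prod.ext_iff.mp h).1
  · exact (basept_ne_outerpt h.symm).elim

lemma pt_ne_outer {n : ℕ} {z : D} (hz : z ≠ outerpt) : pt n z ≠ outer n := by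
  intro h
  rcases Quotient.exact h with h | ⟨-, h⟩
  · exact hz (Prod.ext_iff.mp h).2
  · exact basept_ne_outerpt h.symm

lemma continuous_pt_crsTop (n : ℕ) : Continuous[_, crsTop] (pt n) :=
  continuous_def.mpr fun _ hU =>
    hU.1.preimage (continuous_quotient_mk'.comp (Continuous.prodMk_right n))

lemma outer_mem_crs_closure_of_cell_diff_subset {n : ℕ} {U : Set X}
    (hU : cell n \ {outer n} ⊆ U) : outer n ∈ closure[crsTop] U := by
  have hpunctured : MapsTo (pt n) {outerpt}ᶜ U := fun z hz => hU ⟨⟨z, rfl⟩, pt_ne_outer hz⟩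
  let := crsTop
  exact map_mem_closure (f := pt n) (continuous_pt_crsTop n)
    (dense_compl_singleton outerpt outerpt) hpunctured

lemma eventually_outer_mem_crs_closure {U : Set X} (hU : IsOpen[crsTop] U) (hoU : origin ∈ U) :
    ∀ᶠ n in cofinite, outer n ∈ closure[crsTop] U :=
  (hU.2.resolve_left (not_not_intro hoU)).subset fun _ hn hsub =>
    hn (outer_mem_crs_closure_of_cell_diff_subset hsub)

lemma tendsto_comp_outer_cofinite {Y : Type*} [TopologicalSpace Y] [RegularSpace Y] {g : X → Y}
    (hg : Continuous[crsTop, _] g) : Tendsto (g ∘ outer) cofinite (𝓝 (g origin)) := by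
  let := crsTop
  refine (closed_nhds_basis (g origin)).tendsto_right_iff.mpr fun W ⟨hW, hWclosed⟩ => ?_
  obtain ⟨O, hOW, hO, hgO⟩ := mem_nhds_iff.mp hW
  filter_upwards [eventually_outer_mem_crs_closure (hO.preimage hg) hgO] with n hn
  exact closure_minimal (preimage_mono hOW) (hWclosed.preimage hg) hn

/-- the sheaf of continuous real-valued functions on `X_crs` is not soft:
not every real-valued function on the closed discrete subset `A` extends to a continuous
function on `X_crs`. -/
theorem crs_not_soft :
    ¬ ∀ φ : A → ℝ, ∃ g : X → ℝ,
        @Continuous X ℝ crsTop _ g ∧ ∀ a : A, g a = φ a := by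
  intro h
  obtain ⟨g, hg, hext⟩ := h fun a => ((Equiv.ofInjective outer outer_injective).symm a : ℝ)
  have hg_outer : g ∘ outer = fun n : ℕ => (n : ℝ) := funext fun n =>
    (hext ⟨outer n, n, rfl⟩).trans (congrArg _ (Equiv.ofInjective_symm_apply _ n))
  have hbounded := tendsto_comp_outer_cofinite hg
  rw [hg_outer, Nat.cofinite_eq_atTop] at hbounded
  exact not_tendsto_nhds_of_tendsto_atTop tendsto_natCast_atTop_atTop _ hbounded

end
end

section
/- The space X_crs is metacompact (pointwise paracompact): every open cover of X_crs admits a point-finite open refinement. -/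
open Set Topology Filter

noncomputable section

/-!
Every cell `C_n` is compact, and the punctured cells `C_n \ {x}` are open in `τ` and pairwise
disjoint. So a cover `𝒰` is refined by one member `U ∋ x` together with the traces on
`C_n \ {x}` of finitely many members covering `C_n`, for each `n`: the origin lies only in `U`,
and any other point lies in a single punctured cell, hence in finitely many of the traces.
-/

theorem exists_pointFinite_open_refinement {Y ι κ : Type*} [t : TopologicalSpace Y] (y₀ : Y)
    {K : κ → Set Y} (hK : ∀ n, IsCompact (K n)) (hK_open : ∀ n, IsOpen (K n \ {y₀}))
    (hK_cover : ⋃ n, K n = univ) (hK_finite : ∀ y, {n | y ∈ K n \ {y₀}}.Finite)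
    {C : ι → Set Y} (hC : ∀ i, IsOpen (C i)) (hC_cover : ⋃ i, C i = univ) :
    ∃ R : Set (Set Y), (∀ V ∈ R, IsOpen V) ∧ ⋃₀ R = univ ∧ (∀ V ∈ R, ∃ i, V ⊆ C i) ∧
      ∀ y, {V ∈ R | y ∈ V}.Finite := by
  obtain ⟨i₀, hi₀⟩ := mem_iUnion.mp (hC_cover ▸ mem_univ y₀ : y₀ ∈ ⋃ i, C i)
  choose s hs using fun n => (hK n).elim_finite_subcover C hC (hC_cover ▸ subset_univ _)
  set piece : κ → ι → Set Y := fun n i => C i ∩ (K n \ {y₀})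
  have mem_pieces {V : Set Y} : V ∈ ⋃ n, piece n '' s n ↔ ∃ n, ∃ i ∈ s n, piece n i = V := by
    simp only [mem_iUnion, mem_image, Finset.mem_coe]
  refine ⟨insert (C i₀) (⋃ n, piece n '' s n), ?_, ?_, ?_, fun y => ?_⟩
  · rintro V (rfl | hV)
    · exact hC i₀
    · obtain ⟨n, i, -, rfl⟩ := mem_pieces.mp hV
      exact (hC i).inter (hK_open n)
  · refine eq_univ_of_forall fun y => ?_
    by_cases hy : y = y₀
    · exact ⟨C i₀, mem_insert _ _, hy ▸ hi₀⟩
    obtain ⟨n, hn⟩ := mem_iUnion.mp (hK_cover ▸ mem_univ y : y ∈ ⋃ n, K n)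
    obtain ⟨i, hi, hyi⟩ := mem_iUnion₂.mp (hs n hn)
    exact ⟨piece n i, mem_insert_of_mem _ (mem_pieces.mpr ⟨n, i, hi, rfl⟩), hyi, hn, hy⟩
  · rintro V (rfl | hV)
    · exact ⟨i₀, subset_rfl⟩
    · obtain ⟨n, i, -, rfl⟩ := mem_pieces.mp hV
      exact ⟨i, inter_subset_left⟩
  · have hsub : {V ∈ insert (C i₀) (⋃ n, piece n '' s n) | y ∈ V} ⊆
        insert (C i₀) (⋃ n ∈ {n | y ∈ K n \ {y₀}}, piece n '' s n) := by
      rintro V ⟨rfl | hV, hyV⟩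
      · exact mem_insert _ _
      · obtain ⟨n, i, hi, rfl⟩ := mem_pieces.mp hV
        exact mem_insert_of_mem _ (mem_biUnion hyV.2 ⟨i, hi, rfl⟩)
    exact (((hK_finite y).biUnion fun n _ => (s n).finite_toSet.image _).insert _).subset hsub

instance : CompactSpace D :=
  (isCompact_iff_compactSpace (s := {z : ℂ | ‖z‖ ≤ 1})).mp <| by
    simpa only [Metric.closedBall, dist_zero_right] using isCompact_closedBall (0 : ℂ) 1

instance : T2Space D := inferInstanceAs (T2Space {z : ℂ // ‖z‖ ≤ 1})

lemma iUnion_cell : ⋃ n, cell n = univ :=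
  eq_univ_of_forall fun y => Quotient.inductionOn y fun ⟨n, z⟩ => mem_iUnion.mpr ⟨n, z, rfl⟩

lemma setOf_mem_cell_diff_origin_subsingleton (y : X) :
    {n | y ∈ cell n \ {origin}}.Subsingleton := by
  rintro n ⟨⟨z, rfl⟩, hz⟩ m ⟨⟨w, hw⟩, -⟩
  rcases Quotient.exact hw with h | h
  · exact (Prod.ext_iff.mp h).1.symm
  · exact absurd (pt_eq_origin_iff.mpr h.2) hz

lemma isOpen_cell_diff_origin (n : ℕ) : IsOpen (cell n \ {origin}) := by
  have hpre : Quotient.mk wsetoid ⁻¹' (cell n \ {origin}) = {n} ×ˢ {z : D | z ≠ basept} := by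
    ext ⟨m, z⟩
    simp only [mem_preimage, mem_singleton_iff, mem_prod, mem_ofPred_eq]
    refine ⟨fun ⟨hm, hz⟩ => ⟨setOf_mem_cell_diff_origin_subsingleton _ ⟨⟨z, rfl⟩, hz⟩ ⟨hm, hz⟩,
      fun h => hz (pt_eq_origin_iff.mpr h)⟩, ?_⟩
    rintro ⟨rfl, hz⟩
    exact ⟨⟨z, rfl⟩, fun h => hz (pt_eq_origin_iff.mp h)⟩
  exact isQuotientMap_quotient_mk'.isOpen_preimage.mp (hpre ▸ (isOpen_discrete _).prod isOpen_ne)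

lemma le_crsTop : (inferInstance : TopologicalSpace X) ≤ crsTop := fun _ hU => hU.1

lemma isCompact_cell (n : ℕ) : @IsCompact X crsTop (cell n) :=
  @isCompact_range _ _ _ crsTop _ _ (continuous_le_rng le_crsTop <|
    continuous_quotient_mk'.comp (Continuous.prodMk_right n))

/-- `X_crs` is metacompact: every open cover admits a point-finite open
refinement. -/
theorem crs_metacompact :
    ∀ (ι : Type) (C : ι → Set X), (∀ i, IsOpen[crsTop] (C i)) → (⋃ i, C i) = Set.univ →
      ∃ R : Set (Set X),
        (∀ V ∈ R, IsOpen[crsTop] V) ∧ ⋃₀ R = Set.univ ∧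
        (∀ V ∈ R, ∃ i, V ⊆ C i) ∧
        ∀ y : X, {V ∈ R | y ∈ V}.Finite := by
  intro ι C hC hcov
  exact exists_pointFinite_open_refinement (t := crsTop) origin isCompact_cell
    (fun n => ⟨isOpen_cell_diff_origin n, Or.inl fun h => h.2 rfl⟩) iUnion_cell
    (fun y => (setOf_mem_cell_diff_origin_subsingleton y).finite) hC hcov

end
end
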